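/- arXiv:1908.06823 — 2 statements merged into one kernel-verified Lean document; each statement's English description precedes it below -/
import Mathlib

section
/- Locally unitary covers have minimal exponent: let G be a finite group, let 1 → R → F →π→ G → 1 be a locally unitary presentation, and let E = F/[R,F]. Then for every finite central extension 1 → A → E' → G → 1 with [E',E'] ∩ A isomorphic to H₂(G;ℤ) (i.e., for every cover E' of G), the exponent of E is at most the exponent of E'. -/
/-- The free product `⟨f₁⟩ ∗ ⋯ ∗ ⟨f_d⟩` of cyclic groups, the `i`-th factor being cyclic of
order `m i` (with `m i = 0` corresponding to an infinite cyclic factor, since `ZMod 0 = ℤ`). -/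
abbrev FreeProdCyclic {ι : Type*} (m : ι → ℕ) : Type _ :=
  Monoid.CoprodI (fun i : ι => Multiplicative (ZMod (m i)))

/-- The distinguished generator `fᵢ` of the `i`-th cyclic free factor. -/
def cyclicGen {ι : Type*} (m : ι → ℕ) (i : ι) : FreeProdCyclic m :=
  Monoid.CoprodI.of (Multiplicative.ofAdd (1 : ZMod (m i)))

/-- The quotient `([F,F] ⊓ R) / [R,F]` appearing in the Hopf formula. -/
abbrev hopfQuotient {F : Type*} [Group F] (R : Subgroup F) : Type _ :=
  ↥(⁅(⊤ : Subgroup F), (⊤ : Subgroup F)⁆ ⊓ R) ⧸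
    ((⁅R, (⊤ : Subgroup F)⁆).subgroupOf (⁅(⊤ : Subgroup F), (⊤ : Subgroup F)⁆ ⊓ R))

instance hopfQuotient_normal {F : Type*} [Group F] (R : Subgroup F) [R.Normal] :
    ((⁅R, (⊤ : Subgroup F)⁆).subgroupOf
      (⁅(⊤ : Subgroup F), (⊤ : Subgroup F)⁆ ⊓ R)).Normal :=
  Subgroup.Normal.subgroupOf inferInstance _

/-- The second integral homology `H₂(G;ℤ)` of a group `G`, realized via the Hopf formula
`H₂(G;ℤ) ≅ ([F,F] ⊓ R)/[R,F]` applied to the canonical presentation `1 → R → F → G → 1`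
of `G` by the free group `F` on the underlying set of `G` (with projection `F → G`
induced by the identity map, whose kernel is `R`). -/
abbrev H2Z (G : Type*) [Group G] : Type _ :=
  hopfQuotient (MonoidHom.ker (FreeGroup.lift (id : G → G)))

/-!
Let `F̂` be free on `f₁, …, f_d`; map it onto `F` and, lifting the images of the generators, into
`E'`, both over `G`. A morphism of presentations `F₁ → F₂` of `G` induces a surjection of Hopf
quotients `([F₁,F₁] ⊓ R₁)/[R₁,F₁] ↠ ([F₂,F₂] ⊓ R₂)/[R₂,F₂]`: modulo `[R₂,F₂]` the kernel `R₂`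
is central and `F₂` is the image of `F₁` times `R₂`, so commutators of `F₂` are images of
commutators of `F₁`. For the central extension `E'` the Hopf quotient is `[E',E'] ⊓ A` itself, hence
`H₂(G) ↠ ([F̂,F̂] ⊓ R̂)/[R̂,F̂] ↠ [E',E'] ⊓ A`, and equal finite orders at the two ends make the
second map injective.

Now let `n = exp E'` and `x ∈ F̂`. In the abelianization `x ^ n` is a product `h` of `n`-th powers
of generators, so `x ^ n h⁻¹ ∈ [F̂,F̂] ⊓ R̂` dies in `E'` and therefore lies in `[R̂,F̂]`. Local
unitarity gives `mᵢ ∣ exp G ∣ n`, so `h` dies in `F`, and `x ^ n` maps into `[R,F]`.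
-/

open Function Subgroup
open scoped commutatorElement

section GroupTheory

variable {F Q G : Type*} [Group F] [Group Q] [Group G]

theorem commutatorElement_mul_mul_of_mem_center {a b z w : Q} (hz : z ∈ center Q)
    (hw : w ∈ center Q) : ⁅a * z, b * w⁆ = ⁅a, b⁆ := by
  have hz' : ∀ x y : Q, z * (x * y) = x * (z * y) := fun x y => by
    rw [← mul_assoc, ← mem_center_iff.mp hz x, mul_assoc]
  have hw' : ∀ x y : Q, w * (x * y) = x * (w * y) := fun x y => by
    rw [← mul_assoc, ← mem_center_iff.mp hw x, mul_assoc]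
  simp only [commutatorElement_def, mul_inv_rev, mul_assoc]
  rw [hz', hz', mul_inv_cancel_left, hw', mul_inv_cancel_left]

theorem commutator_le_map_commutator {φ : F →* Q} (h : ∀ y, ∃ x, (φ x)⁻¹ * y ∈ center Q) :
    commutator Q ≤ (commutator F).map φ := by
  rw [commutator_def, Subgroup.commutator_le]
  intro a _ b _
  obtain ⟨x, hx⟩ := h a
  obtain ⟨y, hy⟩ := h b
  rw [← mul_inv_cancel_left (φ x) a, ← mul_inv_cancel_left (φ y) b,
    commutatorElement_mul_mul_of_mem_center hx hy, ← map_commutatorElement]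
  exact mem_map_of_mem φ (commutator_mem_commutator (mem_top x) (mem_top y))

theorem map_commutator_top_le {H : Subgroup F} {K : Subgroup Q} {φ : F →* Q}
    (h : H ≤ K.comap φ) : map φ ⁅H, ⊤⁆ ≤ ⁅K, (⊤ : Subgroup Q)⁆ := by
  rw [map_commutator]
  exact commutator_mono (map_le_iff_le_comap.mpr h) le_top

theorem map_mk'_le_center_quotient_commutator (R : Subgroup F) [R.Normal] :
    R.map (QuotientGroup.mk' ⁅R, ⊤⁆) ≤ center (F ⧸ ⁅R, ⊤⁆) := by
  rw [← commutator_top_right_eq_bot_iff_le_center,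
    ← map_top_of_surjective _ (QuotientGroup.mk'_surjective ⁅R, ⊤⁆), ← map_commutator,
    Subgroup.map_eq_bot_iff, QuotientGroup.ker_mk']

theorem ker_le_comap_ker {ρ₁ : F →* G} {ρ₂ : Q →* G} {φ : F →* Q} (hφ : ρ₂.comp φ = ρ₁) :
    ρ₁.ker ≤ ρ₂.ker.comap φ := by
  rw [MonoidHom.comap_ker, hφ]

theorem exists_pow_mul_inv_mem_commutator {S : Set F} (hS : Subgroup.closure S = ⊤) (n : ℕ)
    (x : F) : ∃ h ∈ Subgroup.closure ((· ^ n) '' S), x ^ n * h⁻¹ ∈ commutator F := by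
  set K := (Subgroup.closure ((· ^ n) '' S)).map (Abelianization.of : F →* Abelianization F)
  have hK : ∀ y : Abelianization F, y ^ n ∈ K := by
    suffices ⊤ ≤ K.comap (powMonoidHom n) from fun y => this (mem_top y)
    rw [← map_top_of_surjective Abelianization.of QuotientGroup.mk_surjective, ← hS,
      MonoidHom.map_closure, closure_le]
    rintro _ ⟨s, hs, rfl⟩
    exact ⟨s ^ n, subset_closure ⟨s, hs, rfl⟩, map_pow _ _ _⟩
  obtain ⟨h, hh, hx⟩ := hK (Abelianization.of x)
  refine ⟨h, hh, ?_⟩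
  rw [← Abelianization.ker_of, MonoidHom.mem_ker, map_mul, map_inv, map_pow, hx, mul_inv_cancel]

theorem closure_pow_le_ker {S : Set F} {n : ℕ} (φ : F →* Q) (hS : ∀ s ∈ S, φ s ^ n = 1) :
    Subgroup.closure ((· ^ n) '' S) ≤ φ.ker := by
  rw [closure_le]
  rintro _ ⟨s, hs, rfl⟩
  exact (map_pow φ s n).trans (hS s hs)

theorem map_pow_mul_inv_eq_one_of_exponent_dvd {S : Set F} {n : ℕ} (φ : F →* Q)
    (hn : Monoid.exponent Q ∣ n) (x : F) {h : F} (hh : h ∈ Subgroup.closure ((· ^ n) '' S)) :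
    φ (x ^ n * h⁻¹) = 1 := by
  have hpow := Monoid.exponent_dvd_iff_forall_pow_eq_one.mp hn
  rw [map_mul, map_inv, map_pow, hpow, MonoidHom.mem_ker.mp
    (closure_pow_le_ker φ (fun s _ => hpow (φ s)) hh), inv_one, one_mul]

end GroupTheory

theorem FreeGroup.exists_comp_eq_of_surjective {X H K : Type*} [Group H] [Group K] {f : H →* K}
    (hf : Surjective f) (g : FreeGroup X →* K) : ∃ h : FreeGroup X →* H, f.comp h = g :=
  ⟨FreeGroup.lift fun x => (hf (g (.of x))).choose,
    FreeGroup.ext_hom _ _ fun x => by simp [(hf _).choose_spec]⟩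

theorem cyclicGen_pow_eq_one_of_dvd {ι : Type*} (m : ι → ℕ) {i : ι} {k : ℕ} (h : m i ∣ k) :
    cyclicGen m i ^ k = 1 := by
  rw [cyclicGen, ← map_pow, ← ofAdd_nsmul, nsmul_one, (ZMod.natCast_eq_zero_iff k (m i)).mpr h,
    ofAdd_zero, map_one]

theorem closure_range_cyclicGen {ι : Type*} (m : ι → ℕ) :
    Subgroup.closure (Set.range (cyclicGen m)) = ⊤ := by
  refine eq_top_iff.mpr fun y _ => ?_
  induction y using Monoid.CoprodI.induction_on with
  | one => exact one_mem _
  | of i a =>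
    obtain ⟨z, hz⟩ := ZMod.intCast_surjective (Multiplicative.toAdd a)
    have ha : (Monoid.CoprodI.of a : FreeProdCyclic m) = cyclicGen m i ^ z := by
      rw [cyclicGen, ← map_zpow, ← ofAdd_zsmul, zsmul_one, hz, ofAdd_toAdd]
    exact ha ▸ zpow_mem (subset_closure (Set.mem_range_self i)) z
  | mul x y hx hy => exact mul_mem (hx trivial) (hy trivial)

namespace hopfQuotient

variable {F₁ F₂ G : Type*} [Group F₁] [Group F₂] [Group G]

theorem mk_eq_one_iff {R : Subgroup F₁} [R.Normal] {c : ↥(⁅(⊤ : Subgroup F₁), ⊤⁆ ⊓ R)} :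
    (c : hopfQuotient R) = 1 ↔ (c : F₁) ∈ ⁅R, (⊤ : Subgroup F₁)⁆ := by
  rw [QuotientGroup.eq_one_iff, mem_subgroupOf]

def map {R₁ : Subgroup F₁} {R₂ : Subgroup F₂} [R₁.Normal] [R₂.Normal] (φ : F₁ →* F₂)
    (hφ : R₁ ≤ R₂.comap φ) : hopfQuotient R₁ →* hopfQuotient R₂ :=
  QuotientGroup.map _ _
    ((φ.comp (⁅(⊤ : Subgroup F₁), ⊤⁆ ⊓ R₁).subtype).codRestrict _ fun c =>
      ⟨map_commutator_top_le le_top (mem_map_of_mem φ c.2.1), hφ c.2.2⟩)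
    fun _ hc =>
      mem_subgroupOf.mpr (map_commutator_top_le hφ (mem_map_of_mem φ (mem_subgroupOf.mp hc)))

theorem map_surjective {ρ₁ : F₁ →* G} {ρ₂ : F₂ →* G} (hρ₁ : Surjective ρ₁) {φ : F₁ →* F₂}
    (hφ : ρ₂.comp φ = ρ₁) : Surjective (map φ (ker_le_comap_ker hφ)) := by
  intro y
  obtain ⟨⟨c, hcC, hcR⟩, rfl⟩ := QuotientGroup.mk_surjective y
  set q := QuotientGroup.mk' ⁅ρ₂.ker, (⊤ : Subgroup F₂)⁆
  have hgen : ∀ y, ∃ x, ((q.comp φ) x)⁻¹ * y ∈ center (F₂ ⧸ ⁅ρ₂.ker, ⊤⁆) := by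
    intro y
    obtain ⟨f, rfl⟩ := QuotientGroup.mk'_surjective _ y
    obtain ⟨x, hx⟩ := hρ₁ (ρ₂ f)
    refine ⟨x, map_mk'_le_center_quotient_commutator _ ⟨(φ x)⁻¹ * f, ?_, by simp [q]⟩⟩
    rw [SetLike.mem_coe, MonoidHom.mem_ker, map_mul, map_inv, ← MonoidHom.comp_apply, hφ, hx,
      inv_mul_cancel]
  obtain ⟨c', hc'C, hc'⟩ := commutator_le_map_commutator hgen
    (map_commutator_top_le le_top (mem_map_of_mem q hcC))
  have hdiff : (φ c')⁻¹ * c ∈ ⁅ρ₂.ker, ⊤⁆ := QuotientGroup.eq.mp hc'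
  have hc'R : c' ∈ ρ₁.ker := by
    have hdiffR := commutator_le_left _ _ hdiff
    rwa [MonoidHom.mem_ker, map_mul, map_inv, MonoidHom.mem_ker.mp hcR, mul_one, inv_eq_one,
      ← MonoidHom.comp_apply, hφ] at hdiffR
  exact ⟨QuotientGroup.mk ⟨c', hc'C, hc'R⟩, QuotientGroup.eq.mpr (mem_subgroupOf.mpr hdiff)⟩

theorem card_eq_of_le_center {R : Subgroup F₁} [R.Normal] (hR : R ≤ center F₁) :
    Nat.card (hopfQuotient R) = Nat.card ↥(⁅(⊤ : Subgroup F₁), ⊤⁆ ⊓ R) := by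
  have hRF : ⁅R, (⊤ : Subgroup F₁)⁆ = ⊥ := commutator_top_right_eq_bot_iff_le_center.mpr hR
  change (⁅R, (⊤ : Subgroup F₁)⁆.subgroupOf _).index = _
  rw [hRF, bot_subgroupOf, index_bot]

variable {E : Type*} [Group E] [Finite E] {ρ : F₁ →* G} {π' : E →* G} {θ : F₁ →* E}

theorem map_injective_of_cover (hρ : Surjective ρ) (hcentral : π'.ker ≤ center E)
    (hcover : Nonempty (↥(⁅(⊤ : Subgroup E), ⊤⁆ ⊓ π'.ker) ≃* H2Z G)) (hθ : π'.comp θ = ρ) :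
    Injective (map θ (ker_le_comap_ker hθ)) := by
  obtain ⟨e⟩ := hcover
  obtain ⟨γ, hγ⟩ := FreeGroup.exists_comp_eq_of_surjective hρ (FreeGroup.lift id)
  have hγsurj := map_surjective (FreeGroup.lift_surjective_of_surjective surjective_id) hγ
  have : Finite (H2Z G) := Finite.of_equiv _ e.toEquiv
  have hcard : Nat.card (H2Z G) ≤ Nat.card (hopfQuotient π'.ker) :=
    ((Nat.card_congr e.toEquiv).symm.trans (card_eq_of_le_center hcentral).symm).le
  exact ((map_surjective hρ hθ).comp hγsurj).bijective_of_nat_card_le hcard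
    |>.injective.of_comp_right hγsurj

theorem mem_commutator_of_cover (hρ : Surjective ρ) (hcentral : π'.ker ≤ center E)
    (hcover : Nonempty (↥(⁅(⊤ : Subgroup E), ⊤⁆ ⊓ π'.ker) ≃* H2Z G)) (hθ : π'.comp θ = ρ)
    {c : F₁} (hc : c ∈ ⁅(⊤ : Subgroup F₁), ⊤⁆ ⊓ ρ.ker) (hθc : θ c = 1) :
    c ∈ ⁅ρ.ker, (⊤ : Subgroup F₁)⁆ := by
  refine (mk_eq_one_iff (c := ⟨c, hc⟩)).mp (map_injective_of_cover hρ hcentral hcover hθ ?_)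
  rw [map_one]
  exact mk_eq_one_iff.mpr (show θ c ∈ _ from hθc ▸ one_mem _)

end hopfQuotient

theorem locally_unitary_cover_minimal_exponent_general {d : ℕ} (m : Fin d → ℕ)
    {G : Type*} [Group G]
    (π : FreeProdCyclic m →* G) (hsurj : Function.Surjective π)
    (hlu : ∀ i, orderOf (π (cyclicGen m i)) = m i)
    (E' : Type*) [Group E'] [Finite E'] (π' : E' →* G) (hsurj' : Function.Surjective π')
    (hcentral : π'.ker ≤ Subgroup.center E')
    (hcover : Nonempty (↥(⁅(⊤ : Subgroup E'), (⊤ : Subgroup E')⁆ ⊓ π'.ker) ≃* H2Z G)) :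
    Monoid.exponent (FreeProdCyclic m ⧸ ⁅π.ker, (⊤ : Subgroup (FreeProdCyclic m))⁆) ≤
      Monoid.exponent E' := by
  set n := Monoid.exponent E'
  have hGn : Monoid.exponent G ∣ n := MonoidHom.exponent_dvd hsurj'
  set α := FreeGroup.lift (cyclicGen m)
  have hα : Surjective α :=
    FreeGroup.lift_surjective_iff_closure_range_eq_top.mpr (closure_range_cyclicGen m)
  have hρ : Surjective (π.comp α) := hsurj.comp hα
  obtain ⟨θ, hθ⟩ := FreeGroup.exists_comp_eq_of_surjective hsurj' (π.comp α)
  refine Nat.le_of_dvd (Nat.pos_of_ne_zero Monoid.exponent_ne_zero_of_finite)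
    (Monoid.exponent_dvd_of_forall_pow_eq_one fun y => ?_)
  obtain ⟨y, rfl⟩ := QuotientGroup.mk_surjective y
  obtain ⟨x, rfl⟩ := hα y
  obtain ⟨h, hh, hc⟩ := exists_pow_mul_inv_mem_commutator (FreeGroup.closure_range_of _) n x
  have hαh : α h = 1 := closure_pow_le_ker α (by
    rintro _ ⟨i, rfl⟩
    exact cyclicGen_pow_eq_one_of_dvd m (hlu i ▸ (Monoid.order_dvd_exponent _).trans hGn)) hh
  have hρc : x ^ n * h⁻¹ ∈ (π.comp α).ker := map_pow_mul_inv_eq_one_of_exponent_dvd _ hGn x hh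
  have hθc : θ (x ^ n * h⁻¹) = 1 := map_pow_mul_inv_eq_one_of_exponent_dvd _ dvd_rfl x hh
  have hcR := hopfQuotient.mem_commutator_of_cover hρ hcentral hcover hθ ⟨hc, hρc⟩ hθc
  have hαc := map_commutator_top_le (ker_le_comap_ker rfl) (mem_map_of_mem α hcR)
  rw [map_mul, map_inv, hαh, inv_one, mul_one] at hαc
  rwa [← QuotientGroup.mk_pow, QuotientGroup.eq_one_iff, ← map_pow]

theorem locally_unitary_cover_minimal_exponent {d : ℕ} (m : Fin d → ℕ)
    {G : Type*} [Group G] [Finite G]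
    (π : FreeProdCyclic m →* G) (hsurj : Function.Surjective π)
    (hlu : ∀ i, orderOf (π (cyclicGen m i)) = m i)
    (E' : Type*) [Group E'] [Finite E'] (π' : E' →* G) (hsurj' : Function.Surjective π')
    (hcentral : π'.ker ≤ Subgroup.center E')
    (hcover : Nonempty (↥(⁅(⊤ : Subgroup E'), (⊤ : Subgroup E')⁆ ⊓ π'.ker) ≃* H2Z G)) :
    Monoid.exponent (FreeProdCyclic m ⧸ ⁅π.ker, (⊤ : Subgroup (FreeProdCyclic m))⁆) ≤
      Monoid.exponent E' :=
  locally_unitary_cover_minimal_exponent_general m π hsurj hlu E' π' hsurj' hcentral hcover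
end

section
/- Let F = ⟨f₁⟩ ∗ ⋯ ∗ ⟨f_d⟩ be a free product of cyclic groups, let φ : F → A be a surjective homomorphism onto a non-cyclic elementary abelian p-group A, and let K = ker φ. Then for every k ≥ 0 the subgroup [K,_{k+1}F] is properly contained in [K,_kF]. -/
/-- Iterated commutator subgroups: `[R,₀F] = R` and `[R,_{k+1}F] = [[R,_kF],F]`. -/
def iterComm {F : Type*} [Group F] (R : Subgroup F) : ℕ → Subgroup F
  | 0 => R
  | k + 1 => ⁅iterComm R k, (⊤ : Subgroup F)⁆

instance iterComm_normal {F : Type*} [Group F] (R : Subgroup F) [hR : R.Normal] (k : ℕ) :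
    (iterComm R k).Normal := by
  induction k with
  | zero => exact hR
  | succ k ih => exact @Subgroup.commutator_normal _ _ _ _ ih _

/-!
Since `A` is generated by the images of the `fᵢ` and is not cyclic, two different generators
`x = fᵢ`, `y = fⱼ` have nontrivial images, so `p` divides their orders. Let `ζ` be a primitive
`p`-th root of unity in `ℤ[ζ]` and map `F` to the affine group of `ℤ[ζ]` by `x ↦ (t ↦ ζ t)`,
`y ↦ (t ↦ ζ t + 1)` and the other generators to `1`. The image lies in the congruence subgroup of
maps `t ↦ b t + c` with `b ≡ 1 mod (ζ - 1)`, whose `(n+1)`-st lower central term consists of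
translations by multiples of `(ζ - 1)ⁿ`. The commutator `[x, [x, … [x, y]]]` with `k` copies of
`x` lies in `[K,_kF]` and maps to the translation by `(ζ - 1)^(k+1)`. If `[K,_{k+1}F] = [K,_kF]`,
this subgroup lies in every term of the lower central series of `F`, so `(ζ - 1)^(k+2)` would
divide `(ζ - 1)^(k+1)`, which is impossible since `ζ - 1` is prime in `ℤ[ζ]`.
-/

open scoped commutatorElement
open Multiplicative

section

variable (R : Type*) [CommRing R]

def unitsMulAut : Rˣ →* MulAut (Multiplicative R) where
  toFun b :=
    { toFun x := ofAdd (b * x.toAdd)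
      invFun x := ofAdd (↑b⁻¹ * x.toAdd)
      left_inv x := by simp
      right_inv x := by simp
      map_mul' x y := by simp [mul_add, ofAdd_add] }
  map_one' := by ext; simp
  map_mul' a b := by ext; simp [mul_assoc]

abbrev AffineGroup : Type _ := SemidirectProduct (Multiplicative R) Rˣ (unitsMulAut R)

end

namespace AffineGroup

variable {R : Type*} [CommRing R]

/-- The affine map `x ↦ b * x + t`. -/
def mk (t : R) (b : Rˣ) : AffineGroup R := ⟨ofAdd t, b⟩

lemma mk_left_right (g : AffineGroup R) : mk g.left.toAdd g.right = g := rfl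

lemma mk_mul_mk (t s : R) (b c : Rˣ) : mk t b * mk s c = mk (t + b * s) (b * c) := rfl

lemma mk_zero_one : mk (0 : R) 1 = 1 := rfl

lemma inv_mk (t : R) (b : Rˣ) : (mk t b)⁻¹ = mk (-(↑b⁻¹ * t)) b⁻¹ := by
  refine inv_eq_of_mul_eq_one_right ?_
  rw [mk_mul_mk, mul_inv_cancel, ← mk_zero_one]
  congr 1
  simp

lemma commutatorElement_mk (t s : R) (b c : Rˣ) :
    ⁅mk t b, mk s c⁆ = mk (t + b * s - c * t - s) 1 := by
  simp only [commutatorElement_def, mk_mul_mk, inv_mk]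
  congr 1
  · simp only [Units.val_mul]
    linear_combination (-(c * t) - c * ↑c⁻¹ * s) * b.mul_inv - s * c.mul_inv
  · rw [mul_comm b c]; group

lemma mk_pow (t : R) (b : Rˣ) (n : ℕ) :
    mk t b ^ n = mk ((∑ i ∈ Finset.range n, (b : R) ^ i) * t) (b ^ n) := by
  induction n with
  | zero => simp [mk_zero_one]
  | succ n ih =>
    rw [pow_succ, ih, mk_mul_mk, Finset.sum_range_succ, pow_succ b n, Units.val_pow_eq_pow_val]
    congr 1
    ring

def congrSubgroup (I : Ideal R) : Subgroup (AffineGroup R) :=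
  ((Units.map (Ideal.Quotient.mk I : R →* R ⧸ I)).comp SemidirectProduct.rightHom).ker

lemma mem_congrSubgroup {I : Ideal R} {g : AffineGroup R} :
    g ∈ congrSubgroup I ↔ (g.right : R) - 1 ∈ I := by
  rw [congrSubgroup, MonoidHom.mem_ker, MonoidHom.comp_apply, Units.ext_iff]
  simp [← Ideal.Quotient.mk_eq_mk_iff_sub_mem]

def transSubgroup (I : Ideal R) : Subgroup (AffineGroup R) where
  carrier := {g | g.right = 1 ∧ g.left.toAdd ∈ I}
  one_mem' := ⟨rfl, I.zero_mem⟩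
  mul_mem' := by
    rintro ⟨t, b⟩ ⟨s, c⟩ ⟨rfl : b = 1, ht⟩ ⟨rfl : c = 1, hs⟩
    exact ⟨mul_one 1, by simpa using I.add_mem ht hs⟩
  inv_mem' := by
    rintro ⟨t, b⟩ ⟨rfl : b = 1, ht⟩
    exact ⟨inv_one, by simpa using I.neg_mem ht⟩

lemma mem_transSubgroup {I : Ideal R} {g : AffineGroup R} :
    g ∈ transSubgroup I ↔ ∃ t ∈ I, mk t 1 = g := by
  constructor
  · rintro ⟨hg, ht⟩
    exact ⟨_, ht, by rw [← hg]; rfl⟩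
  · rintro ⟨t, ht, rfl⟩
    exact ⟨rfl, ht⟩

lemma mk_mem_transSubgroup {I : Ideal R} {t : R} : mk t 1 ∈ transSubgroup I ↔ t ∈ I :=
  and_iff_right rfl

lemma commutator_top_le_transSubgroup_top :
    ⁅(⊤ : Subgroup (AffineGroup R)), ⊤⁆ ≤ transSubgroup (⊤ : Ideal R) := by
  rw [Subgroup.commutator_le]
  intro g _ h _
  rw [← mk_left_right g, ← mk_left_right h, commutatorElement_mk]
  exact mk_mem_transSubgroup.mpr Submodule.mem_top

lemma commutator_transSubgroup_congrSubgroup_le (I J : Ideal R) :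
    ⁅transSubgroup J, congrSubgroup I⁆ ≤ transSubgroup (I * J) := by
  rw [Subgroup.commutator_le]
  rintro _ hg h hh
  obtain ⟨t, ht, rfl⟩ := mem_transSubgroup.mp hg
  rw [← mk_left_right h, commutatorElement_mk, mk_mem_transSubgroup]
  convert neg_mem (Ideal.mul_mem_mul (mem_congrSubgroup.mp hh) ht) using 1
  rw [Units.val_one, one_mul]
  ring

lemma lowerCentralSeries_congrSubgroup_succ_le (I : Ideal R) (n : ℕ) :
    (congrSubgroup I).lowerCentralSeries (n + 1) ≤ transSubgroup (I ^ n) := by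
  induction n with
  | zero =>
    rw [pow_zero, Ideal.one_eq_top]
    exact (Subgroup.commutator_mono le_top le_top).trans commutator_top_le_transSubgroup_top
  | succ n ih =>
    rw [Subgroup.lowerCentralSeries_succ, pow_succ']
    exact (Subgroup.commutator_mono ih le_rfl).trans
      (commutator_transSubgroup_congrSubgroup_le I _)

lemma iterate_commutatorElement_mk_zero (b : Rˣ) (t : R) (l : ℕ) :
    (⁅mk 0 b, ·⁆)^[l] (mk t 1) = mk (((b : R) - 1) ^ l * t) 1 := by
  induction l with
  | zero => simp
  | succ l ih =>
    rw [Function.iterate_succ_apply', ih, commutatorElement_mk]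
    congr 1
    ring

lemma mk_pow_eq_one [IsDomain R] {p : ℕ} {b : Rˣ} (hb : IsPrimitiveRoot (b : R) p) (hp : 1 < p)
    (t : R) : mk t b ^ p = 1 := by
  rw [mk_pow, hb.geom_sum_eq_zero hp, zero_mul, (IsPrimitiveRoot.coe_units_iff.mp hb).pow_eq_one,
    mk_zero_one]

end AffineGroup

namespace FreeProdCyclic

variable {ι : Type*} (m : ι → ℕ)

lemma cyclicGen_pow_self (i : ι) : cyclicGen m i ^ m i = 1 := by
  rw [cyclicGen, ← map_pow, ← ofAdd_nsmul, nsmul_one, ZMod.natCast_self, ofAdd_zero, map_one]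

lemma exists_of_eq_cyclicGen_zpow {i : ι} (x : Multiplicative (ZMod (m i))) :
    ∃ t : ℤ, (Monoid.CoprodI.of x : FreeProdCyclic m) = cyclicGen m i ^ t := by
  obtain ⟨t, ht⟩ := ZMod.intCast_surjective x.toAdd
  refine ⟨t, ?_⟩
  rw [cyclicGen, ← map_zpow, ← ofAdd_zsmul, zsmul_one, ht, ofAdd_toAdd]

lemma range_le_of_cyclicGen_mem {G : Type*} [Group G] (ψ : FreeProdCyclic m →* G)
    {H : Subgroup G} (h : ∀ i, ψ (cyclicGen m i) ∈ H) : ψ.range ≤ H := by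
  rintro _ ⟨x, rfl⟩
  induction x using Monoid.CoprodI.induction_on with
  | one => simp
  | of i x =>
    obtain ⟨t, ht⟩ := exists_of_eq_cyclicGen_zpow m x
    rw [ht, map_zpow]
    exact zpow_mem (h i) t
  | mul x y hx hy => rw [map_mul]; exact mul_mem hx hy

def zmodLift {G : Type*} [Group G] {n : ℕ} (g : G) (hg : g ^ n = 1) :
    Multiplicative (ZMod n) →* G :=
  AddMonoidHom.toMultiplicativeLeft
    (ZMod.lift n ⟨zmultiplesHom _ (Additive.ofMul g), by simp [← ofMul_pow, hg]⟩)

def lift {G : Type*} [Group G] (g : ι → G) (hg : ∀ i, g i ^ m i = 1) :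
    FreeProdCyclic m →* G :=
  Monoid.CoprodI.lift fun i => zmodLift (g i) (hg i)

lemma lift_cyclicGen {G : Type*} [Group G] (g : ι → G) (hg : ∀ i, g i ^ m i = 1) (i : ι) :
    lift m g hg (cyclicGen m i) = g i := by
  rw [lift, cyclicGen, Monoid.CoprodI.lift_of]
  simp only [zmodLift, AddMonoidHom.toMultiplicativeLeft_apply_apply, toAdd_ofAdd]
  rw [← Int.cast_one, ZMod.lift_coe]
  simp

lemma exists_pair_map_cyclicGen_ne_one {G : Type*} [Group G] (φ : FreeProdCyclic m →* G)
    (hφ : Function.Surjective φ) (hG : ¬IsCyclic G) :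
    ∃ i j, i ≠ j ∧ φ (cyclicGen m i) ≠ 1 ∧ φ (cyclicGen m j) ≠ 1 := by
  have hgen (a : G) : ∃ l, φ (cyclicGen m l) ∉ Subgroup.zpowers a := by
    by_contra! h
    exact hG ⟨a, fun g => range_le_of_cyclicGen_mem m φ h (MonoidHom.mem_range.mpr (hφ g))⟩
  obtain ⟨i, hi⟩ := hgen 1
  obtain ⟨j, hj⟩ := hgen (φ (cyclicGen m i))
  refine ⟨i, j, ?_, fun h => hi (by rw [h]; exact one_mem _),
    fun h => hj (by rw [h]; exact one_mem _)⟩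
  rintro rfl
  exact hj (Subgroup.mem_zpowers _)

lemma dvd_of_map_cyclicGen_ne_one {G : Type*} [Group G] {p : ℕ} [Fact p.Prime]
    (hG : ∀ a : G, a ^ p = 1) (φ : FreeProdCyclic m →* G) {i : ι}
    (hi : φ (cyclicGen m i) ≠ 1) : p ∣ m i := by
  rw [← orderOf_eq_prime (hG _) hi]
  exact orderOf_dvd_of_pow_eq_one (by rw [← map_pow, cyclicGen_pow_self, map_one])

open AffineGroup in
lemma exists_hom_affineGroup {i j : ι} (hij : i ≠ j) {D : Type*} [CommRing D] [IsDomain D]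
    {p : ℕ} (hp : 1 < p) {ζ : Dˣ} (hζ : IsPrimitiveRoot (ζ : D) p) (hi : p ∣ m i)
    (hj : p ∣ m j) :
    ∃ ψ : FreeProdCyclic m →* AffineGroup D, ψ (cyclicGen m i) = mk 0 ζ ∧
      ψ (cyclicGen m j) = mk 1 ζ ∧ ψ.range ≤ congrSubgroup (Ideal.span {(ζ : D) - 1}) := by
  classical
  set g : ι → AffineGroup D := fun l => if l = i then mk 0 ζ else if l = j then mk 1 ζ else 1
  have hg (l : ι) : g l ^ m l = 1 := by
    simp only [g]
    split_ifs with hli hlj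
    · obtain ⟨q, hq⟩ := hli ▸ hi
      rw [hq, pow_mul, mk_pow_eq_one hζ hp, one_pow]
    · obtain ⟨q, hq⟩ := hlj ▸ hj
      rw [hq, pow_mul, mk_pow_eq_one hζ hp, one_pow]
    · exact one_pow _
  refine ⟨lift m g hg, by simp [lift_cyclicGen, g], by simp [lift_cyclicGen, g, hij.symm],
    range_le_of_cyclicGen_mem m _ fun l => ?_⟩
  rw [lift_cyclicGen]
  simp only [g]
  split_ifs <;> simp [mem_congrSubgroup, mk]

end FreeProdCyclic

lemma le_lowerCentralSeries_of_commutator_eq {G : Type*} [Group G] {N : Subgroup G}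
    (h : ⁅N, ⊤⁆ = N) (n : ℕ) : N ≤ (⊤ : Subgroup G).lowerCentralSeries n := by
  induction n with
  | zero => exact le_top
  | succ n ih => rw [← h]; exact Subgroup.commutator_mono ih le_top

lemma iterate_commutatorElement_mem_iterComm {G : Type*} [Group G] {N : Subgroup G} {c : G}
    (hc : c ∈ N) (x : G) (l : ℕ) : (⁅x, ·⁆)^[l] c ∈ iterComm N l := by
  induction l with
  | zero => exact hc
  | succ l ih =>
    rw [Function.iterate_succ_apply', iterComm, Subgroup.commutator_comm]
    exact Subgroup.commutator_mem_commutator (Subgroup.mem_top x) ih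

open AffineGroup in
theorem iterComm_succ_lt_of_affineGroup {G : Type*} [Group G] {D : Type*} [CommRing D]
    [IsDomain D] (N : Subgroup G) [N.Normal] {x y : G} (hxy : ⁅x, y⁆ ∈ N) {ζ : Dˣ}
    (hζ₀ : (ζ : D) - 1 ≠ 0) (hζ : ¬IsUnit ((ζ : D) - 1)) (ψ : G →* AffineGroup D)
    (hψ : ψ.range ≤ congrSubgroup (Ideal.span {(ζ : D) - 1}))
    (hx : ψ x = mk 0 ζ) (hy : ψ y = mk 1 ζ) (k : ℕ) :
    iterComm N (k + 1) < iterComm N k := by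
  refine lt_of_le_of_ne (Subgroup.commutator_le_left _ _) fun hfix => ?_
  set c := (⁅x, ·⁆)^[k] ⁅x, y⁆
  have hψc : ψ c = mk (((ζ : D) - 1) ^ (k + 1)) 1 := by
    rw [(Function.Semiconj.iterate_right (map_commutatorElement ψ x) k).eq, map_commutatorElement,
      hx, hy, commutatorElement_mk, iterate_commutatorElement_mk_zero]
    congr 1
    ring
  have hc : ψ c ∈ transSubgroup (Ideal.span {(ζ : D) - 1} ^ (k + 2)) := by
    have hc := Subgroup.mem_map_of_mem ψ (le_lowerCentralSeries_of_commutator_eq hfix (k + 3)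
      (iterate_commutatorElement_mem_iterComm hxy x k))
    rw [Subgroup.map_lowerCentralSeries, ← MonoidHom.range_eq_map] at hc
    exact lowerCentralSeries_congrSubgroup_succ_le _ _ (Subgroup.lowerCentralSeries_mono _ hψ hc)
  rw [hψc, mk_mem_transSubgroup, Ideal.span_singleton_pow, Ideal.mem_span_singleton,
    pow_dvd_pow_iff hζ₀ hζ] at hc
  omega

theorem iterComm_strict_of_elementary_abelian_quotient {d : ℕ} (m : Fin d → ℕ)
    {A : Type*} [CommGroup A] {p : ℕ} (hp : p.Prime)
    (hA : ∀ a : A, a ^ p = 1) (hnc : ¬ IsCyclic A)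
    (φ : FreeProdCyclic m →* A) (hsurj : Function.Surjective φ) :
    ∀ k : ℕ, iterComm φ.ker (k + 1) < iterComm φ.ker k := by
  have := Fact.mk hp
  have : NeZero p := ⟨hp.ne_zero⟩
  have : IsCyclotomicExtension {p} ℚ (CyclotomicField p ℚ) :=
    CyclotomicField.isCyclotomicExtension p ℚ
  obtain ⟨i, j, hij, hi, hj⟩ := FreeProdCyclic.exists_pair_map_cyclicGen_ne_one m φ hsurj hnc
  have hzeta := IsCyclotomicExtension.zeta_spec p ℚ (CyclotomicField p ℚ)
  have hζ := hzeta.toInteger_isPrimitiveRoot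
  obtain ⟨ψ, hψi, hψj, hψ⟩ := FreeProdCyclic.exists_hom_affineGroup m hij hp.one_lt
    (ζ := (hζ.isUnit hp.ne_zero).unit) hζ
    (FreeProdCyclic.dvd_of_map_cyclicGen_ne_one m hA φ hi)
    (FreeProdCyclic.dvd_of_map_cyclicGen_ne_one m hA φ hj)
  have hxy : ⁅cyclicGen m i, cyclicGen m j⁆ ∈ φ.ker := by
    rw [MonoidHom.mem_ker, map_commutatorElement, commutatorElement_eq_one_iff_commute]
    exact Commute.all _ _
  exact iterComm_succ_lt_of_affineGroup φ.ker hxy hzeta.zeta_sub_one_prime'.ne_zero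
    hzeta.zeta_sub_one_prime'.not_isUnit ψ hψ hψi hψj
end
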